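/- arXiv:1909.02769 — 6 statements merged into one kernel-verified Lean document; each statement's English description precedes it below -/
import Mathlib

section
/- For any policies $\pi,\pi'$ on a finite discounted regularized MDP, $\langle q_\lambda^{\pi} + \lambda\nabla\omega(\pi),\, \pi' - \pi\rangle = T_\lambda^{\pi'} v_\lambda^{\pi} - v_\lambda^{\pi} - \lambda B_\omega(\pi' ,\pi)$, where for each state $s$ the left side is $\sum_a (q_\lambda^{\pi}(s,a)+\lambda\,\partial_{\pi(a\mid s)}\omega(\pi(\cdot\mid s)))\,(\pi'(a\mid s)-\pi(a\mid s))$ and $B_\omega(\pi',\pi)(s)$ is the Bregman distance of $\omega$ between $\pi'(\cdot\mid s)$ and $\pi(\cdot\mid s)$. -/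
/-! Averaging `q_λ^π(s, ·)` under `π(· | s)` gives `v_λ^π(s)` (Bellman equation), and averaging it
under `π'(· | s)` gives `T_λ^{π'} v_λ^π (s)` except that the regularizer is `λ ω(π)` instead of
`λ ω(π')`. Subtracting, the mismatch `λ (ω(π') - ω(π))` together with the gradient term is
exactly `λ B_ω(π', π)`. -/

open Finset

section
variable {A : Type*} [Fintype A]

theorem sum_mul_sub_eq_sub_sum_mul (f μ ν : A → ℝ) :
    ∑ a, f a * (ν a - μ a) = ∑ a, ν a * f a - ∑ a, μ a * f a := by
  simp only [mul_sub, sum_sub_distrib, mul_comm]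

theorem sum_mul_lookahead_of_sum_eq_one {μ : A → ℝ} (hμ : ∑ a, μ a = 1)
    (c g : A → ℝ) (r γ : ℝ) :
    ∑ a, μ a * (c a + r + γ * g a) = ∑ a, μ a * c a + r + γ * ∑ a, μ a * g a := by
  simp only [mul_add, sum_add_distrib, ← sum_mul, hμ, one_mul, mul_sum, mul_left_comm]

end

theorem bellman_q_function_identity_general
    (S A : Type*) [Fintype S] [Fintype A]
    (γ lam : ℝ)
    (p : S → A → S → ℝ)
    (c : S → A → ℝ) (ω : (A → ℝ) → ℝ) (Dω : (A → ℝ) → A → ℝ)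
    (π π' : S → A → ℝ)
    (hπ : ∀ s, π s ∈ stdSimplex ℝ A) (hπ' : ∀ s, π' s ∈ stdSimplex ℝ A)
    (v : S → ℝ)
    (hv : ∀ s, v s = (∑ a, π s a * c s a) + lam * ω (π s)
        + γ * ∑ a, π s a * ∑ s', p s a s' * v s')
    (q : S → A → ℝ)
    (hq : ∀ s a, q s a = c s a + lam * ω (π s) + γ * ∑ s', p s a s' * v s') :
    ∀ s, (∑ a, (q s a + lam * Dω (π s) a) * (π' s a - π s a))
      = ((∑ a, π' s a * c s a) + lam * ω (π' s)
          + γ * ∑ a, π' s a * ∑ s', p s a s' * v s') - v s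
        - lam * (ω (π' s) - ω (π s) - ∑ a, Dω (π s) a * (π' s a - π s a)) := by
  intro s
  have hπ_q : ∑ a, π s a * q s a = v s := by
    simp only [hq, sum_mul_lookahead_of_sum_eq_one (hπ s).2, ← hv]
  have hπ'_q : ∑ a, π' s a * q s a = ∑ a, π' s a * c s a + lam * ω (π s)
      + γ * ∑ a, π' s a * ∑ s', p s a s' * v s' := by
    simp only [hq, sum_mul_lookahead_of_sum_eq_one (hπ' s).2]
  calc (∑ a, (q s a + lam * Dω (π s) a) * (π' s a - π s a))
      = ∑ a, q s a * (π' s a - π s a) + lam * ∑ a, Dω (π s) a * (π' s a - π s a) := by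
        simp only [add_mul, sum_add_distrib, mul_sum, mul_assoc]
    _ = _ := by
        rw [sum_mul_sub_eq_sub_sum_mul, hπ_q, hπ'_q]
        ring

/-- Connection between the regularized Bellman operator and the q-function:
`⟨q_λ^π + λ∇ω(π), π' - π⟩ = T_λ^{π'} v_λ^π - v_λ^π - λ B_ω(π',π)`, statewise. -/
theorem bellman_q_function_identity
    (S A : Type*) [Fintype S] [Fintype A]
    (γ lam : ℝ) (hγ0 : 0 < γ) (hγ1 : γ < 1) (hlam : 0 ≤ lam)
    (p : S → A → S → ℝ) (hp0 : ∀ s a s', 0 ≤ p s a s')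
    (hp1 : ∀ s a, ∑ s', p s a s' = 1)
    (c : S → A → ℝ) (ω : (A → ℝ) → ℝ) (Dω : (A → ℝ) → A → ℝ)
    (π π' : S → A → ℝ)
    (hπ : ∀ s, π s ∈ stdSimplex ℝ A) (hπ' : ∀ s, π' s ∈ stdSimplex ℝ A)
    (v : S → ℝ)
    (hv : ∀ s, v s = (∑ a, π s a * c s a) + lam * ω (π s)
        + γ * ∑ a, π s a * ∑ s', p s a s' * v s')
    (q : S → A → ℝ)
    (hq : ∀ s a, q s a = c s a + lam * ω (π s) + γ * ∑ s', p s a s' * v s') :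
    ∀ s, (∑ a, (q s a + lam * Dω (π s) a) * (π' s a - π s a))
      = ((∑ a, π' s a * c s a) + lam * ω (π' s)
          + γ * ∑ a, π' s a * ∑ s', p s a s' * v s') - v s
        - lam * (ω (π' s) - ω (π s) - ∑ a, Dω (π s) a * (π' s a - π s a)) :=
  bellman_q_function_identity_general S A γ lam p c ω Dω π π' hπ hπ' v hv q hq
end

section
/- (Linear approximation of a policy's value.) For policies $\pi,\pi'\in(\Delta_A)^S$ on a finite discounted regularized MDP, the directional derivative of the value satisfies $\langle \nabla_\pi v_\lambda^{\pi},\, \pi'-\pi\rangle = (I-\gamma P^{\pi})^{-1}\bigl(T_\lambda^{\pi'} v_\lambda^{\pi} - v_\lambda^{\pi} - \lambda B_\omega(\pi',\pi)\bigr)$, as an identity of vectors in $\mathbb{R}^S$. -/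
open Finset Matrix

/-- The value of a (possibly extended) policy `y`, defined via the matrix-inverse formula
`v(y) = (I - γ P^y)⁻¹ c^y_λ`. -/
noncomputable def Vext {S A : Type*} [Fintype S] [Fintype A] [DecidableEq S]
    (γ lam : ℝ) (p : S → A → S → ℝ) (c : S → A → ℝ) (ω : (A → ℝ) → ℝ)
    (y : S → A → ℝ) : S → ℝ :=
  ((1 : Matrix S S ℝ) - γ • Matrix.of fun s s' => ∑ a, y s a * p s a s')⁻¹ *ᵥ
    fun s => ∑ a, y s a * (c s a + lam * ω (y s))

/-!
Along the segment `π_t = π + t (π' - π)` the value is `v_t = (I - γ P^{π_t})⁻¹ c_λ^{π_t}`, where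
`P^{π_t}` is affine in `t`. Since `(M⁻¹)' = -M⁻¹ M' M⁻¹`, the derivative at `t = 0` is
`(I - γ P^π)⁻¹ (ċ + γ P^{π' - π} v)`, with `ċ` the derivative of the regularized cost. The
Bellman equation `v = c_λ^π + γ P^π v` turns the bracket into `T_λ^{π'} v - v - λ B_ω(π', π)`.
-/

-- Any norm would do: all of them induce the product topology on matrices.
attribute [local instance] Matrix.linftyOpNormedAddCommGroup Matrix.linftyOpNormedSpace
  Matrix.linftyOpNormedRing Matrix.linftyOpNormedAlgebra

section MatrixCalculus

variable {𝕜 n : Type*} [RCLike 𝕜] [Fintype n]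
  {M : 𝕜 → Matrix n n 𝕜} {M' : Matrix n n 𝕜} {g : 𝕜 → n → 𝕜} {g' : n → 𝕜} {t : 𝕜}

theorem HasDerivAt.matrix_mulVec (hM : HasDerivAt M M' t) (hg : HasDerivAt g g' t) :
    HasDerivAt (fun t => M t *ᵥ g t) (M t *ᵥ g' + M' *ᵥ g t) t :=
  ((Matrix.mulVecBilin 𝕜 𝕜 : Matrix n n 𝕜 →ₗ[𝕜] (n → 𝕜) →ₗ[𝕜] n → 𝕜).toContinuousBilinearMap
    ).hasDerivAt_of_bilinear (fun _ => hM) (fun _ => hg)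

variable [DecidableEq n]

theorem HasDerivAt.matrix_inv (hM : HasDerivAt M M' t) (hdet : IsUnit (M t).det) :
    HasDerivAt (fun t => (M t)⁻¹) (-((M t)⁻¹ * M' * (M t)⁻¹)) t := by
  obtain ⟨u, hu⟩ := (Matrix.isUnit_iff_isUnit_det _).2 hdet
  have hinv : ((u⁻¹ : (Matrix n n 𝕜)ˣ) : Matrix n n 𝕜) = (M t)⁻¹ := by
    rw [Matrix.nonsing_inv_eq_ringInverse, ← hu, Ring.inverse_unit]
  have hring : HasFDerivAt Ring.inverse (-ContinuousLinearMap.mulLeftRight 𝕜 _ (M t)⁻¹ (M t)⁻¹)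
      (M t) := hinv ▸ hu ▸ hasFDerivAt_ringInverse u
  have h : HasDerivAt (fun t => Ring.inverse (M t)) _ t := hring.comp_hasDerivAt t hM
  simp only [← Matrix.nonsing_inv_eq_ringInverse] at h
  exact h

theorem HasDerivAt.matrix_inv_mulVec (hM : HasDerivAt M M' t) (hg : HasDerivAt g g' t)
    (hdet : IsUnit (M t).det) :
    HasDerivAt (fun t => (M t)⁻¹ *ᵥ g t) ((M t)⁻¹ *ᵥ (g' - M' *ᵥ ((M t)⁻¹ *ᵥ g t))) t := by
  convert (hM.matrix_inv hdet).matrix_mulVec hg using 1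
  rw [mulVec_sub, mulVec_mulVec, mulVec_mulVec, neg_mulVec, sub_eq_add_neg]

end MatrixCalculus

theorem Matrix.eq_add_smul_mulVec_of_eq_inv_mulVec {R n : Type*} [CommRing R] [Fintype n]
    [DecidableEq n] {P : Matrix n n R} {γ : R} {v g : n → R} (hdet : IsUnit (1 - γ • P).det)
    (hv : v = (1 - γ • P)⁻¹ *ᵥ g) : v = g + γ • (P *ᵥ v) := by
  have h : (1 - γ • P) *ᵥ v = g := by
    rw [hv, mulVec_mulVec, mul_nonsing_inv _ hdet, one_mulVec]
  rw [← h, sub_mulVec, one_mulVec, smul_mulVec, sub_add_cancel]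

section MDP

variable {S A : Type*} [Fintype A]

def policyKernel (p : S → A → S → ℝ) (y : S → A → ℝ) : Matrix S S ℝ :=
  Matrix.of fun s s' => ∑ a, y s a * p s a s'

def regCost (lam : ℝ) (c : S → A → ℝ) (ω : (A → ℝ) → ℝ) (y : S → A → ℝ) : S → ℝ :=
  fun s => ∑ a, y s a * (c s a + lam * ω (y s))

theorem Vext_eq_inv_mulVec [Fintype S] [DecidableEq S] (γ lam : ℝ) (p : S → A → S → ℝ)
    (c : S → A → ℝ) (ω : (A → ℝ) → ℝ) (y : S → A → ℝ) :
    Vext γ lam p c ω y = (1 - γ • policyKernel p y)⁻¹ *ᵥ regCost lam c ω y :=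
  rfl

theorem policyKernel_mulVec_apply [Fintype S] (p : S → A → S → ℝ) (y : S → A → ℝ) (v : S → ℝ)
    (s : S) :
    (policyKernel p y *ᵥ v) s = ∑ a, y s a * ∑ s', p s a s' * v s' := by
  simp only [policyKernel, mulVec, dotProduct, of_apply, Finset.sum_mul, Finset.mul_sum]
  rw [Finset.sum_comm]
  exact Finset.sum_congr rfl fun _ _ => Finset.sum_congr rfl fun _ _ => mul_assoc _ _ _

theorem regCost_apply_of_sum_eq_one (lam : ℝ) (c : S → A → ℝ) (ω : (A → ℝ) → ℝ)
    {y : S → A → ℝ} {s : S} (hy : ∑ a, y s a = 1) :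
    regCost lam c ω y s = ∑ a, y s a * c s a + lam * ω (y s) := by
  simp only [regCost, mul_add, Finset.sum_add_distrib, ← Finset.sum_mul, hy, one_mul]

theorem hasDerivAt_policyKernel_line [Fintype S] (p : S → A → S → ℝ) (y d : S → A → ℝ) (t : ℝ) :
    HasDerivAt (fun t => policyKernel p fun s a => y s a + t * d s a) (policyKernel p d) t := by
  have hline : (fun t : ℝ => policyKernel p fun s a => y s a + t * d s a)
      = fun t => policyKernel p y + t • policyKernel p d := by
    funext t
    ext s s'
    simp only [policyKernel, Matrix.add_apply, Matrix.smul_apply, of_apply, smul_eq_mul, add_mul,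
      Finset.sum_add_distrib, Finset.mul_sum, mul_assoc]
  rw [hline]
  exact (((hasDerivAt_id t).smul_const _).const_add _).congr_deriv (one_smul _ _)

theorem hasDerivAt_regCost_line (lam : ℝ) (c : S → A → ℝ) {ω : (A → ℝ) → ℝ}
    {ω' : S → (A → ℝ) →L[ℝ] ℝ} {y d : S → A → ℝ} (hω : ∀ s, HasFDerivAt ω (ω' s) (y s))
    (hy : ∀ s, ∑ a, y s a = 1) (hd : ∀ s, ∑ a, d s a = 0) :
    HasDerivAt (fun t => regCost lam c ω fun s a => y s a + t * d s a)
      (fun s => ∑ a, d s a * c s a + lam * ω' s (d s)) 0 := by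
  rw [hasDerivAt_pi]
  intro s
  have hcoord : ∀ a, HasDerivAt (fun t : ℝ => y s a + t * d s a) (d s a) 0 := fun a => by
    simpa using ((hasDerivAt_id (0 : ℝ)).mul_const (d s a)).const_add (y s a)
  have hreg : HasDerivAt (fun t : ℝ => ω fun b => y s b + t * d s b) (ω' s (d s)) 0 := by
    have hline : HasDerivAt (fun t : ℝ => fun b => y s b + t * d s b) (d s) 0 :=
      hasDerivAt_pi.2 hcoord
    simpa [Function.comp_def] using (hω s).comp_hasDerivAt_of_eq 0 hline (by simp)
  refine (HasDerivAt.fun_sum fun a (_ : a ∈ univ) =>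
    (hcoord a).fun_mul ((hreg.const_mul lam).const_add (c s a))).congr_deriv ?_
  simp only [zero_mul, add_zero, mul_add, Finset.sum_add_distrib, ← Finset.sum_mul, hd, hy,
    one_mul]

end MDP

theorem linear_approximation_of_value_general
    (S A : Type*) [Fintype S] [Fintype A] [DecidableEq S]
    (γ lam : ℝ)
    (p : S → A → S → ℝ)
    (c : S → A → ℝ) (ω : (A → ℝ) → ℝ) (Dω : (A → ℝ) → A → ℝ)
    (hω : ∀ x : A → ℝ,
      HasFDerivAt ω (∑ a, Dω x a • (ContinuousLinearMap.proj a : (A → ℝ) →L[ℝ] ℝ)) x)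
    (π π' : S → A → ℝ)
    (hπ : ∀ s, π s ∈ stdSimplex ℝ A) (hπ' : ∀ s, π' s ∈ stdSimplex ℝ A)
    (P : Matrix S S ℝ) (hP : ∀ s s', P s s' = ∑ a, π s a * p s a s')
    (hdet : IsUnit (1 - γ • P).det)
    (v : S → ℝ) (hv : v = Vext γ lam p c ω π)
    (B : S → ℝ)
    (hB : ∀ s, B s = ω (π' s) - ω (π s) - ∑ a, Dω (π s) a * (π' s a - π s a))
    (Tv : S → ℝ)
    (hTv : ∀ s, Tv s = (∑ a, π' s a * c s a) + lam * ω (π' s)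
        + γ * ∑ a, π' s a * ∑ s', p s a s' * v s') :
    ∀ s, HasDerivAt
        (fun t : ℝ => Vext γ lam p c ω (fun s' a => π s' a + t * (π' s' a - π s' a)) s)
        (((1 - γ • P)⁻¹ *ᵥ fun s' => Tv s' - v s' - lam * B s') s) 0 := by
  intro s
  have hKP : policyKernel p π = P := Matrix.ext fun s s' => (hP s s').symm
  have hdir : ∀ s, ∑ a, (π' s a - π s a) = 0 := fun s => by
    rw [Finset.sum_sub_distrib, (hπ' s).2, (hπ s).2, sub_self]
  have hM : HasDerivAt (fun t => 1 - γ • policyKernel p fun s a => π s a + t * (π' s a - π s a))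
      (-(γ • policyKernel p fun s a => π' s a - π s a)) 0 :=
    ((hasDerivAt_policyKernel_line p π _ 0).const_smul γ).const_sub 1
  have hderiv := hM.matrix_inv_mulVec
    (hasDerivAt_regCost_line lam c (fun s => hω (π s)) (fun s => (hπ s).2) hdir)
    (by simpa only [zero_mul, add_zero, hKP] using hdet)
  have hvP : (1 - γ • P)⁻¹ *ᵥ regCost lam c ω π = v := by rw [hv, Vext_eq_inv_mulVec, hKP]
  have hbellman := eq_add_smul_mulVec_of_eq_inv_mulVec hdet hvP.symm
  refine (hasDerivAt_pi.1 hderiv s).congr_deriv ?_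
  simp only [zero_mul, add_zero, hKP, hvP]
  refine congrFun (congrArg _ (funext fun s' => ?_)) s
  rw [hTv, hB, congrFun hbellman s', ← hKP]
  simp only [Pi.add_apply, Pi.sub_apply, neg_mulVec, Pi.neg_apply, smul_mulVec, Pi.smul_apply,
    smul_eq_mul, regCost_apply_of_sum_eq_one _ _ _ (hπ s').2, policyKernel_mulVec_apply,
    _root_.sum_apply, _root_.smul_apply, ContinuousLinearMap.proj_apply, sub_mul,
    Finset.sum_sub_distrib]
  ring

/-- Linear approximation of a policy's value: the directional derivative of `v_λ^π` in the
direction `π' - π` equals `(I - γ P^π)⁻¹ (T_λ^{π'} v_λ^π - v_λ^π - λ B_ω(π',π))`. -/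
theorem linear_approximation_of_value
    (S A : Type*) [Fintype S] [Fintype A] [DecidableEq S]
    (γ lam : ℝ) (hγ0 : 0 < γ) (hγ1 : γ < 1) (hlam : 0 ≤ lam)
    (p : S → A → S → ℝ) (hp0 : ∀ s a s', 0 ≤ p s a s')
    (hp1 : ∀ s a, ∑ s', p s a s' = 1)
    (c : S → A → ℝ) (ω : (A → ℝ) → ℝ) (Dω : (A → ℝ) → A → ℝ)
    (hω : ∀ x : A → ℝ,
      HasFDerivAt ω (∑ a, Dω x a • (ContinuousLinearMap.proj a : (A → ℝ) →L[ℝ] ℝ)) x)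
    (hωconv : ConvexOn ℝ (stdSimplex ℝ A) ω)
    (π π' : S → A → ℝ)
    (hπ : ∀ s, π s ∈ stdSimplex ℝ A) (hπ' : ∀ s, π' s ∈ stdSimplex ℝ A)
    (P : Matrix S S ℝ) (hP : ∀ s s', P s s' = ∑ a, π s a * p s a s')
    (hdet : IsUnit (1 - γ • P).det)
    (v : S → ℝ) (hv : v = Vext γ lam p c ω π)
    (B : S → ℝ)
    (hB : ∀ s, B s = ω (π' s) - ω (π s) - ∑ a, Dω (π s) a * (π' s a - π s a))
    (Tv : S → ℝ)
    (hTv : ∀ s, Tv s = (∑ a, π' s a * c s a) + lam * ω (π' s)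
        + γ * ∑ a, π' s a * ∑ s', p s a s' * v s') :
    ∀ s, HasDerivAt
        (fun t : ℝ => Vext γ lam p c ω (fun s' a => π s' a + t * (π' s' a - π s' a)) s)
        (((1 - γ • P)⁻¹ *ᵥ fun s' => Tv s' - v s' - lam * B s') s) 0 :=
  linear_approximation_of_value_general S A γ lam p c ω Dω hω π π' hπ hπ' P hP hdet v hv B hB Tv hTv
end

section
/- (Policy gradient theorem for regularized MDPs, tabular case.) For a policy $\pi\in(\Delta_A)^S$, the partial derivative of the regularized value with respect to the tabular parameter $\pi(\bar a\mid \bar s)$ is $\partial_{\pi(\bar a\mid \bar s)} v_\lambda^{\pi}(s) = \sum_{t=0}^{\infty}\gamma^t\, p^{\pi}(s_t=\bar s \mid s_0 = s)\,\bigl(\lambda\, \partial_{\pi(\bar a\mid\bar s)}\omega(\pi(\cdot\mid\bar s)) + q_\lambda^{\pi}(\bar s,\bar a)\bigr)$, equivalently $\nabla_{\pi(\cdot\mid\bar s)} v_\lambda^{\pi}(s) = [(I-\gamma P^{\pi})^{-1}]_{s,\bar s}\,(\lambda\nabla\omega(\pi(\cdot\mid\bar s)) + q_\lambda^{\pi}(\bar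 s,\cdot))$. -/
/-!
Write `v(y) = (I - γ P^y)⁻¹ c^y_λ`. Along a line `y + t d` the matrix `P^y` is affine in `t` and
`c^y_λ` is differentiable, so differentiating the inverse gives
`∂_d v = (I - γ P^y)⁻¹ (∂_d c^y_λ + γ (∂_d P^y) v)`. When the rows of `y` sum to one, the vector in
brackets is `s ↦ ∑ₐ d(s,a) q^y_λ(s,a) + λ ω'(y(s))(d(s))`; for `d` the indicator of `(s̄, ā)` it is
supported at `s̄`, which picks out the column `s̄` of `(I - γ P^π)⁻¹`. Since `P^π` is row-stochastic,
its `ℓ∞` operator norm is at most one, so `‖γ P^π‖ < 1` and `(I - γ P^π)⁻¹` is the Neumann series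
`∑ₙ γⁿ (P^π)ⁿ`, which also shows that `I - γ P^π` is invertible.
-/

open Finset Matrix

attribute [local instance] Matrix.linftyOpNormedAddCommGroup Matrix.linftyOpNormedSpace
  Matrix.linftyOpNormedRing Matrix.linftyOpNormedAlgebra

namespace Matrix

section Calculus

variable {𝕜 : Type*} [RCLike 𝕜] {m n : Type*} [Fintype m] [Fintype n]

theorem isBoundedBilinearMap_mulVec :
    IsBoundedBilinearMap 𝕜 fun x : Matrix m n 𝕜 × (n → 𝕜) => x.1 *ᵥ x.2 where
  add_left M N v := add_mulVec M N v
  smul_left c M v := smul_mulVec c M v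
  add_right M v w := mulVec_add M v w
  smul_right c M v := mulVec_smul M c v
  bound := ⟨1, one_pos, fun M v => by simpa using linfty_opNorm_mulVec M v⟩

theorem _root_.HasDerivAt.mulVec {M : 𝕜 → Matrix m n 𝕜} {M' : Matrix m n 𝕜} {b : 𝕜 → n → 𝕜}
    {b' : n → 𝕜} {t : 𝕜} (hM : HasDerivAt M M' t) (hb : HasDerivAt b b' t) :
    HasDerivAt (fun t => M t *ᵥ b t) (M t *ᵥ b' + M' *ᵥ b t) t := by
  have h := (isBoundedBilinearMap_mulVec.hasFDerivAt (M t, b t)).comp_hasDerivAt t (hM.prodMk hb)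
  simp only [IsBoundedBilinearMap.deriv_apply, Function.comp_def] at h
  exact h

theorem _root_.HasDerivAt.matrix_inv_s6 [DecidableEq n] {M : 𝕜 → Matrix n n 𝕜} {M' : Matrix n n 𝕜}
    {t : 𝕜} (hM : HasDerivAt M M' t) (ht : IsUnit (M t)) :
    HasDerivAt (fun t => (M t)⁻¹) (-((M t)⁻¹ * M' * (M t)⁻¹)) t := by
  obtain ⟨u, hu⟩ := ht
  have h := (hu ▸ hasFDerivAt_ringInverse (𝕜 := 𝕜) u).comp_hasDerivAt t hM
  simp only [nonsing_inv_eq_ringInverse, ← hu, Ring.inverse_unit]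
  simp only [Function.comp_def] at h
  exact h

end Calculus

section RowStochastic

variable {n : Type*} [Fintype n] [DecidableEq n] {M : Matrix n n ℝ}

theorem linfty_opNorm_le_one_of_mem_rowStochastic (hM : M ∈ rowStochastic ℝ n) : ‖M‖ ≤ 1 := by
  rw [linfty_opNorm_def, NNReal.coe_le_one]
  refine Finset.sup_le fun i _ => le_of_eq ?_
  rw [← NNReal.coe_inj]
  push_cast
  simp_rw [Real.norm_of_nonneg (hM.1 _ _)]
  exact sum_row_of_mem_rowStochastic hM i

theorem linfty_opNorm_smul_lt_one_of_mem_rowStochastic (hM : M ∈ rowStochastic ℝ n) {γ : ℝ}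
    (hγ : |γ| < 1) : ‖γ • M‖ < 1 := by
  rw [norm_smul, Real.norm_eq_abs]
  nlinarith [linfty_opNorm_le_one_of_mem_rowStochastic hM, abs_nonneg γ, norm_nonneg M]

theorem isUnit_one_sub_smul_of_mem_rowStochastic (hM : M ∈ rowStochastic ℝ n) {γ : ℝ}
    (hγ : |γ| < 1) : IsUnit (1 - γ • M) :=
  isUnit_one_sub_of_norm_lt_one (linfty_opNorm_smul_lt_one_of_mem_rowStochastic hM hγ)

theorem hasSum_geometric_smul_of_mem_rowStochastic (hM : M ∈ rowStochastic ℝ n) {γ : ℝ}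
    (hγ : |γ| < 1) : HasSum (fun k : ℕ => γ ^ k • M ^ k) (1 - γ • M)⁻¹ := by
  have h := hasSum_geom_series_inverse _ (linfty_opNorm_smul_lt_one_of_mem_rowStochastic hM hγ)
  simp only [smul_pow, ← nonsing_inv_eq_ringInverse] at h
  exact h

end RowStochastic

end Matrix

section PolicyGradient

variable {S A : Type*} [Fintype A]

/-- `P^y` of the paper, for an arbitrary table `y`, not only a policy. -/
noncomputable def policyTransition (p : S → A → S → ℝ) (y : S → A → ℝ) : Matrix S S ℝ :=
  of fun s s' => ∑ a, y s a * p s a s'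

/-- `c^y_λ` of the paper. -/
noncomputable def policyCost (c : S → A → ℝ) (lam : ℝ) (ω : (A → ℝ) → ℝ) (y : S → A → ℝ) :
    S → ℝ :=
  fun s => ∑ a, y s a * (c s a + lam * ω (y s))

theorem policyTransition_add_smul (p : S → A → S → ℝ) (y d : S → A → ℝ) (t : ℝ) :
    policyTransition p (y + t • d) = policyTransition p y + t • policyTransition p d := by
  ext s s'
  simp [policyTransition, add_mul, sum_add_distrib, mul_sum, mul_assoc]

variable [Fintype S]

theorem policyTransition_mem_rowStochastic [DecidableEq S] {p : S → A → S → ℝ}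
    (hp0 : ∀ s a s', 0 ≤ p s a s') (hp1 : ∀ s a, ∑ s', p s a s' = 1) {y : S → A → ℝ}
    (hy : ∀ s, y s ∈ stdSimplex ℝ A) : policyTransition p y ∈ rowStochastic ℝ S := by
  refine mem_rowStochastic_iff_sum.2 ⟨fun s s' => ?_, fun s => ?_⟩
  · exact sum_nonneg fun a _ => mul_nonneg ((hy s).1 a) (hp0 s a s')
  · simp only [policyTransition, of_apply]
    rw [sum_comm]
    simp_rw [← mul_sum, hp1, mul_one]
    exact (hy s).2

theorem policyTransition_mulVec (p : S → A → S → ℝ) (d : S → A → ℝ) (v : S → ℝ) (s : S) :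
    (policyTransition p d *ᵥ v) s = ∑ a, d s a * ∑ s', p s a s' * v s' := by
  simp only [policyTransition, mulVec, dotProduct, of_apply, sum_mul, mul_sum, mul_assoc]
  exact sum_comm

theorem hasLineDerivAt_policyTransition (p : S → A → S → ℝ) (y d : S → A → ℝ) :
    HasLineDerivAt ℝ (policyTransition p) (policyTransition p d) y d := by
  unfold HasLineDerivAt
  simp_rw [policyTransition_add_smul]
  exact (((hasDerivAt_id 0).smul_const _).const_add _).congr_deriv (one_smul ℝ _)

theorem hasLineDerivAt_policyCost (c : S → A → ℝ) (lam : ℝ) {ω : (A → ℝ) → ℝ}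
    {ω' : S → (A → ℝ) →L[ℝ] ℝ} {y : S → A → ℝ} (hω : ∀ s, HasFDerivAt ω (ω' s) (y s))
    (d : S → A → ℝ) :
    HasLineDerivAt ℝ (policyCost c lam ω)
      (fun s => ∑ a, d s a * (c s a + lam * ω (y s)) + (∑ a, y s a) * (lam * ω' s (d s))) y d := by
  refine hasDerivAt_pi.2 fun s => ?_
  have hline : ∀ a, HasDerivAt (fun t : ℝ => y s a + t * d s a) (d s a) 0 := fun a => by
    simpa using (hasDerivAt_mul_const (d s a)).const_add (y s a)
  have hωline : HasDerivAt (fun t : ℝ => ω fun a => y s a + t * d s a) (ω' s (d s)) 0 := by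
    have hωs : HasFDerivAt ω (ω' s) fun a => y s a + (0 : ℝ) * d s a := by simpa using hω s
    exact hωs.comp_hasDerivAt (0 : ℝ) (hasDerivAt_pi.2 hline)
  have h := HasDerivAt.fun_sum fun a (_ : a ∈ univ) =>
    (hline a).mul ((hωline.const_mul lam).const_add (c s a))
  refine h.congr_deriv ?_
  simp [sum_add_distrib, sum_mul]

variable [DecidableEq S] (γ lam : ℝ) (p : S → A → S → ℝ) (c : S → A → ℝ) (ω : (A → ℝ) → ℝ)

/-- `q^y_λ` of the paper. -/
noncomputable def Qext (y : S → A → ℝ) : S → A → ℝ :=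
  fun s a => c s a + lam * ω (y s) + γ * ∑ s', p s a s' * Vext γ lam p c ω y s'

theorem Vext_eq (y : S → A → ℝ) :
    Vext γ lam p c ω y = (1 - γ • policyTransition p y)⁻¹ *ᵥ policyCost c lam ω y :=
  rfl

theorem hasLineDerivAt_Vext {ω' : S → (A → ℝ) →L[ℝ] ℝ} {y : S → A → ℝ}
    (hy : ∀ s, ∑ a, y s a = 1) (hunit : IsUnit (1 - γ • policyTransition p y))
    (hω : ∀ s, HasFDerivAt ω (ω' s) (y s)) (d : S → A → ℝ) :
    HasLineDerivAt ℝ (Vext γ lam p c ω)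
      ((1 - γ • policyTransition p y)⁻¹ *ᵥ
        fun s => ∑ a, d s a * Qext γ lam p c ω y s a + lam * ω' s (d s)) y d := by
  have hM : HasDerivAt (fun t : ℝ => 1 - γ • policyTransition p (y + t • d))
      (-(γ • policyTransition p d)) 0 :=
    ((hasLineDerivAt_policyTransition p y d).const_smul γ).const_sub 1
  have h := (hM.matrix_inv_s6 (by simpa using hunit)).mulVec (hasLineDerivAt_policyCost c lam hω d)
  simp only [zero_smul, add_zero] at h
  refine h.congr_deriv ?_
  rw [mul_neg, neg_mul, neg_neg, ← mulVec_mulVec, ← mulVec_mulVec, ← Vext_eq, ← mulVec_add]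
  congr 1
  ext s
  simp only [Pi.add_apply, smul_mulVec, Pi.smul_apply, policyTransition_mulVec, Qext, hy, one_mul,
    smul_eq_mul, mul_add, sum_add_distrib, mul_left_comm _ γ, ← mul_sum]
  ring

end PolicyGradient

theorem policy_gradient_regularized_general
    (S A : Type*) [Fintype S] [Fintype A] [DecidableEq S] [DecidableEq A]
    (γ lam : ℝ) (hγ0 : 0 < γ) (hγ1 : γ < 1)
    (p : S → A → S → ℝ) (hp0 : ∀ s a s', 0 ≤ p s a s')
    (hp1 : ∀ s a, ∑ s', p s a s' = 1)
    (c : S → A → ℝ) (ω : (A → ℝ) → ℝ) (Dω : (A → ℝ) → A → ℝ)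
    (hω : ∀ x : A → ℝ,
      HasFDerivAt ω (∑ a, Dω x a • (ContinuousLinearMap.proj a : (A → ℝ) →L[ℝ] ℝ)) x)
    (π : S → A → ℝ) (hπ : ∀ s, π s ∈ stdSimplex ℝ A)
    (P : Matrix S S ℝ) (hP : ∀ s s', P s s' = ∑ a, π s a * p s a s')
    (v : S → ℝ) (hv : v = Vext γ lam p c ω π)
    (q : S → A → ℝ)
    (hq : ∀ s a, q s a = c s a + lam * ω (π s) + γ * ∑ s', p s a s' * v s')
    (sbar : S) (abar : A) :
    ∀ s, HasDerivAt
        (fun t : ℝ => Vext γ lam p c ω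
          (fun s' a => π s' a + t * (if s' = sbar ∧ a = abar then (1 : ℝ) else 0)) s)
        ((∑' n : ℕ, γ ^ n * (P ^ n) s sbar) * (lam * Dω (π sbar) abar + q sbar abar)) 0
      ∧ (∑' n : ℕ, γ ^ n * (P ^ n) s sbar) * (lam * Dω (π sbar) abar + q sbar abar)
          = (1 - γ • P)⁻¹ s sbar * (lam * Dω (π sbar) abar + q sbar abar) := by
  intro s
  have hPπ : policyTransition p π = P := by ext s s'; exact (hP s s').symm
  have hstoch : P ∈ rowStochastic ℝ S := hPπ ▸ policyTransition_mem_rowStochastic hp0 hp1 hπ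
  have hγ : |γ| < 1 := abs_lt.2 ⟨by linarith, hγ1⟩
  have hneumann : ∑' n : ℕ, γ ^ n * (P ^ n) s sbar = (1 - γ • P)⁻¹ s sbar := by
    have h := hasSum_geometric_smul_of_mem_rowStochastic hstoch hγ
    simpa using (Pi.hasSum.1 (Pi.hasSum.1 h s) sbar).tsum_eq
  refine ⟨?_, by rw [hneumann]⟩
  rw [hneumann]
  have hq' : q = Qext γ lam p c ω π := by ext s a; rw [hq, hv]; rfl
  have hgrad := hasLineDerivAt_Vext γ lam p c ω (fun s => (hπ s).2)
    (hPπ ▸ isUnit_one_sub_smul_of_mem_rowStochastic hstoch hγ) (fun s => hω (π s))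
    (fun s a => if s = sbar ∧ a = abar then 1 else 0)
  rw [hPπ, ← hq'] at hgrad
  refine (hasDerivAt_pi.1 hgrad s).congr_deriv ?_
  simp [mulVec, dotProduct, ite_and, ite_add_ite, add_comm]

/-- Policy gradient theorem for regularized MDPs (tabular case):
`∂_{π(ā|s̄)} v_λ^π(s) = ∑_t γ^t p^π(s_t = s̄ | s_0 = s) (λ ∂_{π(ā|s̄)} ω(π(·|s̄)) + q_λ^π(s̄,ā))`,
equivalently with `[(I-γP^π)⁻¹]_{s,s̄}` in place of the series. -/
theorem policy_gradient_regularized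
    (S A : Type*) [Fintype S] [Fintype A] [DecidableEq S] [DecidableEq A]
    (γ lam : ℝ) (hγ0 : 0 < γ) (hγ1 : γ < 1) (hlam : 0 ≤ lam)
    (p : S → A → S → ℝ) (hp0 : ∀ s a s', 0 ≤ p s a s')
    (hp1 : ∀ s a, ∑ s', p s a s' = 1)
    (c : S → A → ℝ) (ω : (A → ℝ) → ℝ) (Dω : (A → ℝ) → A → ℝ)
    (hω : ∀ x : A → ℝ,
      HasFDerivAt ω (∑ a, Dω x a • (ContinuousLinearMap.proj a : (A → ℝ) →L[ℝ] ℝ)) x)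
    (π : S → A → ℝ) (hπ : ∀ s, π s ∈ stdSimplex ℝ A)
    (P : Matrix S S ℝ) (hP : ∀ s s', P s s' = ∑ a, π s a * p s a s')
    (hdet : IsUnit (1 - γ • P).det)
    (v : S → ℝ) (hv : v = Vext γ lam p c ω π)
    (q : S → A → ℝ)
    (hq : ∀ s a, q s a = c s a + lam * ω (π s) + γ * ∑ s', p s a s' * v s')
    (sbar : S) (abar : A) :
    ∀ s, HasDerivAt
        (fun t : ℝ => Vext γ lam p c ω
          (fun s' a => π s' a + t * (if s' = sbar ∧ a = abar then (1 : ℝ) else 0)) s)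
        ((∑' n : ℕ, γ ^ n * (P ^ n) s sbar) * (lam * Dω (π sbar) abar + q sbar abar)) 0
      ∧ (∑' n : ℕ, γ ^ n * (P ^ n) s sbar) * (lam * Dω (π sbar) abar + q sbar abar)
          = (1 - γ • P)⁻¹ s sbar * (lam * Dω (π sbar) abar + q sbar abar) :=
  policy_gradient_regularized_general S A γ lam hγ0 hγ1 p hp0 hp1 c ω Dω hω π hπ P hP v hv q hq sbar
    abar
end

section
/- (Policy improvement for Uniform TRPO.) Let $\pi_{k+1}$ satisfy, for each state $s$, the first-order optimality condition of $\min_{\pi\in\Delta_A}\{t_k T_\lambda^{\pi} v_\lambda^{\pi_k}(s) + (1-\lambda t_k)B_\omega(s;\pi,\pi_k)\}$ with $0\le \lambda t_k \le 1$. Then $T_\lambda^{\pi_{k+1}} v_\lambda^{\pi_k} \le v_\lambda^{\pi_k}$ componentwise, and consequently $v_\lambda^{\pi_{k+1}} \le v_\lambda^{\pi_k}$ componentwise. -/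
open Finset

/-- Bregman distance generated by `ω` with gradient representative `Dω`. -/
noncomputable def bregman {A : Type*} [Fintype A] (ω : (A → ℝ) → ℝ)
    (Dω : (A → ℝ) → A → ℝ) (x y : A → ℝ) : ℝ :=
  ω x - ω y - ∑ a, Dω y a * (x a - y a)

/-!
Testing the first-order condition at the old policy `πk s` turns it into
`0 ≤ tk * gap - B(πk, πk1) - (1 - λ tk) * B(πk1, πk)`, where `gap` is how much the
regularized one-step cost of `πk1` against `v` undercuts `v s`; as both Bregman terms are
nonnegative, `T^{πk1} v ≤ v`. Since `T^{πk1}` is monotone and a `γ`-contraction with fixed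
point `v1`, the largest entry `M` of `v1 - v` satisfies `M ≤ γ M`, hence `M ≤ 0`.
-/

theorem sum_mul_le_of_sum_eq_one {ι : Type*} [Fintype ι] {w f : ι → ℝ} {M : ℝ}
    (hw0 : ∀ i, 0 ≤ w i) (hw1 : ∑ i, w i = 1) (hf : ∀ i, f i ≤ M) :
    ∑ i, w i * f i ≤ M :=
  calc ∑ i, w i * f i ≤ ∑ i, w i * M :=
        sum_le_sum fun i _ => mul_le_mul_of_nonneg_left (hf i) (hw0 i)
    _ = M := by rw [← sum_mul, hw1, one_mul]

section Bregman

variable {A : Type*} [Fintype A] (ω : (A → ℝ) → ℝ) (Dω : (A → ℝ) → A → ℝ)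

/-- The summand is the gradient at `y` of `t * (⟪·, q⟫ + λ ω) + (1 - λ t) * B(·, x)`. -/
theorem sum_proxGrad_mul_sub_eq (t lam : ℝ) (q x y : A → ℝ) :
    ∑ a, (t * (q a + lam * Dω y a) + (1 - lam * t) * (Dω y a - Dω x a)) * (x a - y a)
      = t * ((∑ a, x a * q a + lam * ω x) - (∑ a, y a * q a + lam * ω y))
        - bregman ω Dω x y - (1 - lam * t) * bregman ω Dω y x := by
  have hsplit :
      ∑ a, (t * (q a + lam * Dω y a) + (1 - lam * t) * (Dω y a - Dω x a)) * (x a - y a)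
        = t * (∑ a, x a * q a - ∑ a, y a * q a) + ∑ a, Dω y a * (x a - y a)
          + (1 - lam * t) * ∑ a, Dω x a * (y a - x a) := by
    simp only [mul_sum, ← sum_sub_distrib, ← sum_add_distrib]
    exact sum_congr rfl fun a _ => by ring
  rw [hsplit, bregman, bregman]
  ring

theorem proximal_step_le {t lam : ℝ} (ht : 0 < t) (hlt : lam * t ≤ 1) {q x y : A → ℝ}
    (hxy : 0 ≤ bregman ω Dω x y) (hyx : 0 ≤ bregman ω Dω y x)
    (hFOC : 0 ≤ ∑ a, (t * (q a + lam * Dω y a) + (1 - lam * t) * (Dω y a - Dω x a))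
      * (x a - y a)) :
    ∑ a, y a * q a + lam * ω y ≤ ∑ a, x a * q a + lam * ω x := by
  rw [sum_proxGrad_mul_sub_eq ω] at hFOC
  have hgap : 0 ≤ t * ((∑ a, x a * q a + lam * ω x) - (∑ a, y a * q a + lam * ω y)) := by
    linarith [mul_nonneg (sub_nonneg.mpr hlt) hyx]
  exact sub_nonneg.mp (nonneg_of_mul_nonneg_right hgap ht)

end Bregman

section RegularizedMDP

variable {S A : Type*} [Fintype S] [Fintype A]
  (γ lam : ℝ) (p : S → A → S → ℝ) (c : S → A → ℝ) (ω : (A → ℝ) → ℝ)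

/-- `T_λ^π v`. -/
noncomputable def regBellman (π : S → A → ℝ) (v : S → ℝ) (s : S) : ℝ :=
  (∑ a, π s a * c s a) + lam * ω (π s) + γ * ∑ a, π s a * ∑ s', p s a s' * v s'

noncomputable def qValue (v : S → ℝ) (s : S) (a : A) : ℝ :=
  c s a + γ * ∑ s', p s a s' * v s'

theorem regBellman_eq_sum_qValue (π : S → A → ℝ) (v : S → ℝ) (s : S) :
    regBellman γ lam p c ω π v s = ∑ a, π s a * qValue γ p c v s a + lam * ω (π s) := by
  simp only [regBellman, qValue, mul_add, sum_add_distrib, mul_sum]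
  ring_nf

variable {γ p}

theorem regBellman_sub_le (hγ : 0 ≤ γ) (hp0 : ∀ s a s', 0 ≤ p s a s')
    (hp1 : ∀ s a, ∑ s', p s a s' = 1) {π : S → A → ℝ} (hπ : ∀ s, π s ∈ stdSimplex ℝ A)
    {u w : S → ℝ} {M : ℝ} (hM : ∀ s, u s - w s ≤ M) (s : S) :
    regBellman γ lam p c ω π u s - regBellman γ lam p c ω π w s ≤ γ * M := by
  have hdiff : regBellman γ lam p c ω π u s - regBellman γ lam p c ω π w s
      = γ * ∑ a, π s a * ∑ s', p s a s' * (u s' - w s') := by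
    simp only [regBellman, mul_sub, sum_sub_distrib]
    ring
  rw [hdiff]
  exact mul_le_mul_of_nonneg_left (sum_mul_le_of_sum_eq_one (hπ s).1 (hπ s).2 fun a =>
    sum_mul_le_of_sum_eq_one (hp0 s a) (hp1 s a) hM) hγ

theorem le_of_regBellman_le (hγ0 : 0 ≤ γ) (hγ1 : γ < 1) (hp0 : ∀ s a s', 0 ≤ p s a s')
    (hp1 : ∀ s a, ∑ s', p s a s' = 1) {π : S → A → ℝ} (hπ : ∀ s, π s ∈ stdSimplex ℝ A)
    {v v1 : S → ℝ} (hv : ∀ s, regBellman γ lam p c ω π v s ≤ v s)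
    (hv1 : ∀ s, v1 s = regBellman γ lam p c ω π v1 s) (s : S) : v1 s ≤ v s := by
  have : Nonempty S := ⟨s⟩
  obtain ⟨s0, hs0⟩ := Finite.exists_max fun s => v1 s - v s
  have hcontract : ∀ s, v1 s - v s ≤ γ * (v1 s0 - v s0) := fun s => by
    linarith [hv s, hv1 s, regBellman_sub_le lam c ω hγ0 hp0 hp1 hπ hs0 s]
  have hmax : v1 s0 - v s0 ≤ 0 := by nlinarith [hcontract s0]
  linarith [hs0 s]

end RegularizedMDP

theorem policy_improvement_uniform_TRPO_general
    (S A : Type*) [Fintype S] [Fintype A]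
    (γ lam tk : ℝ) (hγ0 : 0 < γ) (hγ1 : γ < 1) (htk : 0 < tk)
    (hlt1 : lam * tk ≤ 1)
    (p : S → A → S → ℝ) (hp0 : ∀ s a s', 0 ≤ p s a s')
    (hp1 : ∀ s a, ∑ s', p s a s' = 1)
    (c : S → A → ℝ)
    (ω : (A → ℝ) → ℝ) (Dω : (A → ℝ) → A → ℝ)
    (hB0 : ∀ x ∈ stdSimplex ℝ A, ∀ y ∈ stdSimplex ℝ A, 0 ≤ bregman ω Dω x y)
    (πk πk1 : S → A → ℝ)
    (hπk : ∀ s, πk s ∈ stdSimplex ℝ A) (hπk1 : ∀ s, πk1 s ∈ stdSimplex ℝ A)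
    (v : S → ℝ)
    (hv : ∀ s, v s = (∑ a, πk s a * c s a) + lam * ω (πk s)
        + γ * ∑ a, πk s a * ∑ s', p s a s' * v s')
    (v1 : S → ℝ)
    (hv1 : ∀ s, v1 s = (∑ a, πk1 s a * c s a) + lam * ω (πk1 s)
        + γ * ∑ a, πk1 s a * ∑ s', p s a s' * v1 s')
    (hFOC : ∀ s, ∀ x ∈ stdSimplex ℝ A,
      0 ≤ ∑ a, (tk * (c s a + γ * ∑ s', p s a s' * v s' + lam * Dω (πk1 s) a)
            + (1 - lam * tk) * (Dω (πk1 s) a - Dω (πk s) a)) * (x a - πk1 s a)) :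
    (∀ s, (∑ a, πk1 s a * c s a) + lam * ω (πk1 s)
        + γ * ∑ a, πk1 s a * ∑ s', p s a s' * v s' ≤ v s)
      ∧ (∀ s, v1 s ≤ v s) := by
  have improvement : ∀ s, regBellman γ lam p c ω πk1 v s ≤ v s := fun s =>
    calc regBellman γ lam p c ω πk1 v s
        = ∑ a, πk1 s a * qValue γ p c v s a + lam * ω (πk1 s) :=
          regBellman_eq_sum_qValue γ lam p c ω πk1 v s
      _ ≤ ∑ a, πk s a * qValue γ p c v s a + lam * ω (πk s) :=
          proximal_step_le ω Dω htk hlt1 (hB0 _ (hπk s) _ (hπk1 s))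
            (hB0 _ (hπk1 s) _ (hπk s)) (hFOC s _ (hπk s))
      _ = v s := (regBellman_eq_sum_qValue γ lam p c ω πk v s).symm.trans (hv s).symm
  exact ⟨improvement, le_of_regBellman_le lam c ω hγ0.le hγ1 hp0 hp1 hπk1 improvement hv1⟩

/-- Policy improvement for Uniform TRPO: if `π_{k+1}` satisfies the first-order optimality
condition of the statewise proximal problem, then `T_λ^{π_{k+1}} v_λ^{π_k} ≤ v_λ^{π_k}`
componentwise, and consequently `v_λ^{π_{k+1}} ≤ v_λ^{π_k}` componentwise. -/
theorem policy_improvement_uniform_TRPO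
    (S A : Type*) [Fintype S] [Fintype A]
    (γ lam tk : ℝ) (hγ0 : 0 < γ) (hγ1 : γ < 1) (htk : 0 < tk)
    (hlt0 : 0 ≤ lam * tk) (hlt1 : lam * tk ≤ 1)
    (p : S → A → S → ℝ) (hp0 : ∀ s a s', 0 ≤ p s a s')
    (hp1 : ∀ s a, ∑ s', p s a s' = 1)
    (c : S → A → ℝ)
    (ω : (A → ℝ) → ℝ) (Dω : (A → ℝ) → A → ℝ)
    (hB0 : ∀ x ∈ stdSimplex ℝ A, ∀ y ∈ stdSimplex ℝ A, 0 ≤ bregman ω Dω x y)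
    (πk πk1 : S → A → ℝ)
    (hπk : ∀ s, πk s ∈ stdSimplex ℝ A) (hπk1 : ∀ s, πk1 s ∈ stdSimplex ℝ A)
    (v : S → ℝ)
    (hv : ∀ s, v s = (∑ a, πk s a * c s a) + lam * ω (πk s)
        + γ * ∑ a, πk s a * ∑ s', p s a s' * v s')
    (v1 : S → ℝ)
    (hv1 : ∀ s, v1 s = (∑ a, πk1 s a * c s a) + lam * ω (πk1 s)
        + γ * ∑ a, πk1 s a * ∑ s', p s a s' * v1 s')
    (hFOC : ∀ s, ∀ x ∈ stdSimplex ℝ A,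
      0 ≤ ∑ a, (tk * (c s a + γ * ∑ s', p s a s' * v s' + lam * Dω (πk1 s) a)
            + (1 - lam * tk) * (Dω (πk1 s) a - Dω (πk s) a)) * (x a - πk1 s a)) :
    (∀ s, (∑ a, πk1 s a * c s a) + lam * ω (πk1 s)
        + γ * ∑ a, πk1 s a * ∑ s', p s a s' * v s' ≤ v s)
      ∧ (∀ s, v1 s ≤ v s) :=
  policy_improvement_uniform_TRPO_general S A γ lam tk hγ0 hγ1 htk hlt1 p hp0 hp1 c ω Dω hB0 πk πk1
    hπk hπk1 v hv v1 hv1 hFOC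
end

section
/- (Convergence of regularized Uniform TRPO, telescoping bound.) Suppose for all $k\ge 0$ and a fixed policy $\pi^*$ the componentwise inequality $t_k(I-\gamma P^{\pi^*})(v_\lambda^{\pi_k}-v_\lambda^{\pi^*}) \le (1-\lambda t_k)B_\omega(\pi^*,\pi_k) - B_\omega(\pi^*,\pi_{k+1}) + \lambda t_k(\omega(\pi_k)-\omega(\pi_{k+1})) + \frac{t_k^2 h^2}{2(1-\lambda t_k)}e$ holds with $t_k = \frac{1}{\lambda(k+2)}$, and suppose additionally $v_\lambda^{\pi_{k+1}} \le v_\lambda^{\pi_k}$ componentwise, $B_\omega \ge 0$, and $|\omega(\pi)(s) - \omega(\pi')(s)| \le D$ and $B_\omega(\pi^*,\pi_0)(s) \le D$ for all $s,\pi,\pi'$. Then for all $N \ge 1$, $\|v_\lambda^{\pi_N} - v_\lambda^{\pi^*}\|_\infty \le \frac{2\lambda D}{(1-\gamma)(N+1)} + \frac{h^2}{2\lambda(1-\gamma)(N+1)}\sum_{k=1}^{N+1}\frac{1}{k}$. -/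
/-!
Scaling the `k`-th fundamental inequality by `λ (k + 2)` turns the Bregman terms into the
telescoping differences `λ (k + 1) B_k - λ (k + 2) B_{k+1}` and leaves the error term
`h² / (2 λ (k + 1))`. Summing over `k ≤ N` bounds `(I - γ P) x` by a constant `C`, where
`x = ∑_{k ≤ N} (v_k - v*)`; since `P` is stochastic, evaluating at a maximiser of `x` gives
`x ≤ C / (1 - γ)`, and monotonicity gives `(N + 1) (v_N - v*) ≤ x`.
-/

open Finset Matrix

namespace Matrix

variable {S : Type*} [Fintype S] [DecidableEq S] {P : Matrix S S ℝ}

lemma mulVec_apply_le_of_mem_rowStochastic (hP : P ∈ rowStochastic ℝ S) {x : S → ℝ}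
    {c : ℝ} (hx : ∀ s, x s ≤ c) (s : S) : (P *ᵥ x) s ≤ c :=
  calc (P *ᵥ x) s = ∑ s', P s s' * x s' := rfl
    _ ≤ ∑ s', P s s' * c :=
      sum_le_sum fun s' _ => mul_le_mul_of_nonneg_left (hx s') (hP.1 s s')
    _ = c := by rw [← sum_mul, sum_row_of_mem_rowStochastic hP, one_mul]

lemma le_div_one_sub_of_one_sub_smul_mulVec_le (hP : P ∈ rowStochastic ℝ S) {γ C : ℝ}
    (hγ0 : 0 ≤ γ) (hγ1 : γ < 1) {x : S → ℝ} (hx : ∀ s, ((1 - γ • P) *ᵥ x) s ≤ C) (s : S) :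
    x s ≤ C / (1 - γ) := by
  obtain ⟨s₀, -, hs₀⟩ := exists_max_image univ x ⟨s, mem_univ s⟩
  have hPx : (P *ᵥ x) s₀ ≤ x s₀ :=
    mulVec_apply_le_of_mem_rowStochastic hP (hs₀ · (mem_univ _)) s₀
  have hxs₀ : ((1 - γ • P) *ᵥ x) s₀ = x s₀ - γ * (P *ᵥ x) s₀ := by
    simp [sub_mulVec, smul_mulVec]
  rw [le_div_iff₀ (by linarith)]
  calc x s * (1 - γ) ≤ x s₀ * (1 - γ) :=
        mul_le_mul_of_nonneg_right (hs₀ s (mem_univ s)) (by linarith)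
    _ ≤ x s₀ - γ * (P *ᵥ x) s₀ := by linarith [mul_le_mul_of_nonneg_left hPx hγ0]
    _ ≤ C := hxs₀ ▸ hx s₀

end Matrix

lemma le_of_stepSize_mul_le {lam k t a b₀ b₁ u h : ℝ} (hlam : 0 < lam) (hk : 0 ≤ k)
    (ht : t = 1 / (lam * (k + 2)))
    (hstep : t * a ≤ (1 - lam * t) * b₀ - b₁ + lam * t * u
      + t ^ 2 * h ^ 2 / (2 * (1 - lam * t))) :
    a ≤ lam * (k + 1) * b₀ - lam * (k + 2) * b₁ + lam * u
      + h ^ 2 / (2 * lam) * (1 / (k + 1)) := by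
  have hscale : 0 < lam * (k + 2) := by positivity
  have hlt : 1 - lam * t = (k + 1) / (k + 2) := by
    rw [ht]; field_simp; ring
  calc a = lam * (k + 2) * (t * a) := by rw [ht]; field_simp
    _ ≤ lam * (k + 2) * ((1 - lam * t) * b₀ - b₁ + lam * t * u
          + t ^ 2 * h ^ 2 / (2 * (1 - lam * t))) := mul_le_mul_of_nonneg_left hstep hscale.le
    _ = _ := by
      have : 0 < k + 1 := by linarith
      rw [hlt, ht]; field_simp

lemma sum_range_one_div_succ (n : ℕ) :
    ∑ k ∈ range n, 1 / ((k : ℝ) + 1) = ∑ k ∈ Icc 1 n, (1 : ℝ) / k := by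
  have := sum_Ico_add' (fun k : ℕ => (1 : ℝ) / k) 0 n 1
  push_cast at this
  rw [range_eq_Ico, this, Ico_add_one_right_eq_Icc]

lemma sum_range_telescoping_le {lam D c : ℝ} {b w : ℕ → ℝ} (n : ℕ) (hlam : 0 ≤ lam)
    (hb₀ : b 0 ≤ D) (hbn : 0 ≤ b n) (hw : |w 0 - w n| ≤ D) :
    ∑ k ∈ range n, (lam * (k + 1) * b k - lam * (k + 2) * b (k + 1) + lam * (w k - w (k + 1))
        + c * (1 / (k + 1))) ≤ 2 * lam * D + c * ∑ k ∈ Icc 1 n, (1 : ℝ) / k := by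
  let f : ℕ → ℝ := fun k => lam * (k + 1) * b k + lam * w k
  have htel : ∀ k ∈ range n, lam * (k + 1) * b k - lam * (k + 2) * b (k + 1)
      + lam * (w k - w (k + 1)) = f k - f (k + 1) := by
    intro k _; simp only [f]; push_cast; ring
  rw [sum_add_distrib, sum_congr rfl htel, sum_range_sub', ← mul_sum, sum_range_one_div_succ]
  have hbn' : 0 ≤ lam * (n + 1) * b n := by positivity
  have hb₀' := mul_le_mul_of_nonneg_left hb₀ hlam
  have hw' := mul_le_mul_of_nonneg_left (abs_le.1 hw).2 hlam
  simp only [f, Nat.cast_zero]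
  linarith

lemma Antitone.succ_mul_le_sum_range {f : ℕ → ℝ} (hf : Antitone f) (n : ℕ) :
    (n + 1) * f n ≤ ∑ k ∈ range (n + 1), f k := by
  have := card_nsmul_le_sum (range (n + 1)) f (f n) fun k hk => hf (mem_range_succ_iff.1 hk)
  simpa using this

theorem regularized_uniform_TRPO_convergence_general
    (S : Type*) [Fintype S] [DecidableEq S]
    (γ lam h D : ℝ) (hγ0 : 0 < γ) (hγ1 : γ < 1) (hlam : 0 < lam)
    (P : Matrix S S ℝ) (hP0 : ∀ s s', 0 ≤ P s s') (hP1 : ∀ s, ∑ s', P s s' = 1)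
    (t : ℕ → ℝ) (ht : ∀ k, t k = 1 / (lam * (k + 2)))
    (v : ℕ → S → ℝ) (vstar : S → ℝ)
    (B : ℕ → S → ℝ) (w : ℕ → S → ℝ)
    (hmain : ∀ k s,
      t k * (((1 - γ • P) *ᵥ fun s' => v k s' - vstar s') s)
        ≤ (1 - lam * t k) * B k s - B (k + 1) s
          + lam * t k * (w k s - w (k + 1) s)
          + t k ^ 2 * h ^ 2 / (2 * (1 - lam * t k)))
    (hmono : ∀ k s, v (k + 1) s ≤ v k s)
    (hopt : ∀ k s, vstar s ≤ v k s)
    (hBnonneg : ∀ k s, 0 ≤ B k s)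
    (hw : ∀ k j s, |w k s - w j s| ≤ D)
    (hB0 : ∀ s, B 0 s ≤ D) :
    ∀ N : ℕ, 1 ≤ N → ∀ s,
      |v N s - vstar s| ≤ 2 * lam * D / ((1 - γ) * (N + 1))
        + h ^ 2 / (2 * lam * (1 - γ) * (N + 1)) * ∑ k ∈ Finset.Icc 1 (N + 1), (1 : ℝ) / k := by
  intro N _ s
  set C := 2 * lam * D + h ^ 2 / (2 * lam) * ∑ k ∈ Icc 1 (N + 1), (1 : ℝ) / k
  set x : S → ℝ := ∑ k ∈ range (N + 1), (v k - vstar)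
  have hx : ∀ s, ((1 - γ • P) *ᵥ x) s ≤ C := fun s => by
    rw [mulVec_sum, Finset.sum_apply]
    refine (sum_le_sum fun k _ =>
      le_of_stepSize_mul_le hlam k.cast_nonneg (ht k) (hmain k s)).trans ?_
    exact (sum_range_telescoping_le (N + 1) hlam.le (hB0 s) (hBnonneg _ s) (hw 0 (N + 1) s))
  have hxs : x s ≤ C / (1 - γ) := le_div_one_sub_of_one_sub_smul_mulVec_le
    (mem_rowStochastic_iff_sum.2 ⟨hP0, hP1⟩) hγ0.le hγ1 hx s
  have hNx : (N + 1) * (v N s - vstar s) ≤ x s := by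
    have hanti : Antitone fun k => v k s - vstar s :=
      antitone_nat_of_succ_le fun k => sub_le_sub_right (hmono k s) _
    simpa [x] using hanti.succ_mul_le_sum_range N
  have hγ : 0 < 1 - γ := by linarith
  rw [abs_of_nonneg (sub_nonneg.2 (hopt N s))]
  calc v N s - vstar s ≤ C / (1 - γ) / (N + 1) := by
        rw [le_div_iff₀ (by positivity)]; linarith
    _ = _ := by simp only [C]; field_simp

/-- Convergence of regularized Uniform TRPO via telescoping: under the fundamental
inequality with step sizes `t_k = 1/(λ(k+2))`, monotone improvement, and bounds `D` on the
regularizer and initial Bregman distance,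
`‖v_λ^{π_N} - v_λ^*‖_∞ ≤ 2λD/((1-γ)(N+1)) + h²/(2λ(1-γ)(N+1)) ∑_{k=1}^{N+1} 1/k`. -/
theorem regularized_uniform_TRPO_convergence
    (S : Type*) [Fintype S] [DecidableEq S] [Nonempty S]
    (γ lam h D : ℝ) (hγ0 : 0 < γ) (hγ1 : γ < 1) (hlam : 0 < lam) (hD : 0 ≤ D)
    (P : Matrix S S ℝ) (hP0 : ∀ s s', 0 ≤ P s s') (hP1 : ∀ s, ∑ s', P s s' = 1)
    (t : ℕ → ℝ) (ht : ∀ k, t k = 1 / (lam * (k + 2)))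
    (v : ℕ → S → ℝ) (vstar : S → ℝ)
    (B : ℕ → S → ℝ) (w : ℕ → S → ℝ)
    (hmain : ∀ k s,
      t k * (((1 - γ • P) *ᵥ fun s' => v k s' - vstar s') s)
        ≤ (1 - lam * t k) * B k s - B (k + 1) s
          + lam * t k * (w k s - w (k + 1) s)
          + t k ^ 2 * h ^ 2 / (2 * (1 - lam * t k)))
    (hmono : ∀ k s, v (k + 1) s ≤ v k s)
    (hopt : ∀ k s, vstar s ≤ v k s)
    (hBnonneg : ∀ k s, 0 ≤ B k s)
    (hw : ∀ k j s, |w k s - w j s| ≤ D)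
    (hB0 : ∀ s, B 0 s ≤ D) :
    ∀ N : ℕ, 1 ≤ N → ∀ s,
      |v N s - vstar s| ≤ 2 * lam * D / ((1 - γ) * (N + 1))
        + h ^ 2 / (2 * lam * (1 - γ) * (N + 1)) * ∑ k ∈ Finset.Icc 1 (N + 1), (1 : ℝ) / k :=
  regularized_uniform_TRPO_convergence_general S γ lam h D hγ0 hγ1 hlam P hP0 hP1 t ht v vstar B w
    hmain hmono hopt hBnonneg hw hB0
end

section
/- (Lower bound on log-probabilities under exponentiated-gradient updates.) Consider the iterates $\pi_{k+1}(a\mid s) \propto \pi_k(a\mid s)\exp(-t_k(q_k(s,a) + \lambda\log\pi_k(a\mid s)))$ with $\pi_0$ uniform, step sizes $t_k = \frac{1}{\lambda(k+2)}$, and $0 \le q_k(s,a) \le Q$ for all $k,s,a$. Then for all $k \ge 1$ and all $(s,a)$: $\log\pi_k(a\mid s) \ge -\log A - (Q/\lambda + \log A)(1 + \log k)$. -/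
/-! The update multiplies `π` by `exp (-t q) * π ^ (-λt) ≤ π ^ (-λt)` and renormalises.
By Jensen's inequality for the concave map `x ↦ x ^ (λt)` under the weights `π`, the
normaliser is at most `A ^ (λt)`; since `log π ≤ 0`, one step therefore lowers `log π` by at
most `t (Q + λ log A) = (Q/λ + log A)/(k+2)`. Summing these losses from `log π₀ = -log A`
gives the bound, as `∑_{i<k} 1/(i+2)` is at most the harmonic number `H_k ≤ 1 + log k`. -/

open Finset

lemma sum_mul_inv_rpow_le_card_rpow {ι : Type*} [Fintype ι] {p : ι → ℝ} (hp : ∀ i, 0 < p i)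
    (hp1 : ∑ i, p i = 1) {ε : ℝ} (hε₀ : 0 ≤ ε) (hε₁ : ε ≤ 1) :
    ∑ i, p i * (p i)⁻¹ ^ ε ≤ (Fintype.card ι : ℝ) ^ ε := by
  have := (Real.concaveOn_rpow hε₀ hε₁).le_map_sum (t := univ) (w := p)
    (p := fun i => (p i)⁻¹) (fun i _ => (hp i).le) hp1
    (fun i _ => Set.mem_Ici.2 (inv_nonneg.2 (hp i).le))
  simpa [smul_eq_mul, mul_inv_cancel₀ (hp _).ne'] using this

namespace ExpUpdate

variable {A : Type*} [Fintype A]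

noncomputable def normalizer (t lam : ℝ) (c p : A → ℝ) : ℝ :=
  ∑ a, p a * Real.exp (-t * (c a + lam * Real.log (p a)))

noncomputable def step (t lam : ℝ) (c p : A → ℝ) (a : A) : ℝ :=
  p a * Real.exp (-t * (c a + lam * Real.log (p a))) / normalizer t lam c p

variable {t lam : ℝ} {c p : A → ℝ}

lemma normalizer_pos [Nonempty A] (hp : ∀ a, 0 < p a) : 0 < normalizer t lam c p :=
  sum_pos (fun a _ => mul_pos (hp a) (Real.exp_pos _)) univ_nonempty

lemma step_pos [Nonempty A] (hp : ∀ a, 0 < p a) (a : A) : 0 < step t lam c p a :=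
  div_pos (mul_pos (hp a) (Real.exp_pos _)) (normalizer_pos hp)

lemma sum_step [Nonempty A] (hp : ∀ a, 0 < p a) : ∑ a, step t lam c p a = 1 := by
  simp_rw [step, ← sum_div]
  exact div_self (normalizer_pos hp).ne'

lemma log_normalizer_le (hp : ∀ a, 0 < p a) (hp1 : ∑ a, p a = 1) (ht : 0 ≤ t)
    (hlam : 0 ≤ lam) (hlamt : lam * t ≤ 1) (hc : ∀ a, 0 ≤ c a) :
    Real.log (normalizer t lam c p) ≤ lam * t * Real.log (Fintype.card A) := by
  have hterm : ∀ a, p a * Real.exp (-t * (c a + lam * Real.log (p a)))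
      ≤ p a * (p a)⁻¹ ^ (lam * t) := fun a => by
    rw [Real.inv_rpow (hp a).le, ← Real.rpow_neg (hp a).le, Real.rpow_def_of_pos (hp a)]
    refine mul_le_mul_of_nonneg_left (Real.exp_le_exp.2 ?_) (hp a).le
    linarith [mul_nonneg ht (hc a)]
  have hN : normalizer t lam c p ≤ (Fintype.card A : ℝ) ^ (lam * t) :=
    (sum_le_sum fun a _ => hterm a).trans
      (sum_mul_inv_rpow_le_card_rpow hp hp1 (mul_nonneg hlam ht) hlamt)
  have : Nonempty A := univ_nonempty_iff.1 (nonempty_of_sum_ne_zero (hp1 ▸ one_ne_zero))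
  calc Real.log (normalizer t lam c p) ≤ Real.log ((Fintype.card A : ℝ) ^ (lam * t)) :=
        Real.log_le_log (normalizer_pos hp) hN
    _ = lam * t * Real.log (Fintype.card A) := Real.log_rpow (by positivity) _

lemma log_sub_le_log_step (hp : ∀ a, 0 < p a) (hp1 : ∑ a, p a = 1) (ht : 0 ≤ t)
    (hlam : 0 ≤ lam) (hlamt : lam * t ≤ 1) (hc : ∀ a, 0 ≤ c a) (a : A) :
    Real.log (p a) - t * (c a + lam * Real.log (Fintype.card A))
      ≤ Real.log (step t lam c p a) := by
  have : Nonempty A := ⟨a⟩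
  have hpa : p a ≤ 1 := hp1 ▸ single_le_sum (fun b _ => (hp b).le) (mem_univ a)
  have hlog_step : Real.log (step t lam c p a)
      = Real.log (p a) - t * (c a + lam * Real.log (p a)) - Real.log (normalizer t lam c p) := by
    rw [step, Real.log_div (mul_pos (hp a) (Real.exp_pos _)).ne' (normalizer_pos hp).ne',
      Real.log_mul (hp a).ne' (Real.exp_pos _).ne', Real.log_exp]
    ring
  have hlog_nonpos : lam * t * Real.log (p a) ≤ 0 :=
    mul_nonpos_of_nonneg_of_nonpos (mul_nonneg hlam ht) (Real.log_nonpos (hp a).le hpa)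
  linarith [log_normalizer_le hp hp1 ht hlam hlamt hc]

end ExpUpdate

lemma sum_range_inv_add_two_le_one_add_log (k : ℕ) :
    ∑ i ∈ range k, ((i : ℝ) + 2)⁻¹ ≤ 1 + Real.log k :=
  calc ∑ i ∈ range k, ((i : ℝ) + 2)⁻¹ ≤ ∑ i ∈ range k, ((i : ℝ) + 1)⁻¹ := by
        gcongr; linarith
    _ = harmonic k := by simp [harmonic]
    _ ≤ 1 + Real.log k := harmonic_le_one_add_log k

lemma sub_sum_range_le_of_le_succ_add {u b : ℕ → ℝ} (h : ∀ i, u i ≤ u (i + 1) + b i)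
    (k : ℕ) : u 0 - ∑ i ∈ range k, b i ≤ u k := by
  have := sum_le_sum (s := range k) (fun i _ => sub_le_iff_le_add'.2 (h i))
  rw [sum_range_sub'] at this
  linarith

theorem log_prob_lower_bound_exponentiated_updates_general
    (S A : Type*) [Fintype A]
    (lam Q : ℝ) (hlam : 0 < lam)
    (t : ℕ → ℝ) (ht : ∀ k, t k = 1 / (lam * (k + 2)))
    (q : ℕ → S → A → ℝ) (hq0 : ∀ k s a, 0 ≤ q k s a) (hqQ : ∀ k s a, q k s a ≤ Q)
    (π : ℕ → S → A → ℝ)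
    (hπ0 : ∀ s a, π 0 s a = 1 / (Fintype.card A : ℝ))
    (hupd : ∀ k s a, π (k + 1) s a =
      π k s a * Real.exp (-(t k) * (q k s a + lam * Real.log (π k s a)))
        / ∑ a', π k s a' * Real.exp (-(t k) * (q k s a' + lam * Real.log (π k s a')))) :
    ∀ k : ℕ, 1 ≤ k → ∀ s a,
      -Real.log (Fintype.card A)
          - (Q / lam + Real.log (Fintype.card A)) * (1 + Real.log k)
        ≤ Real.log (π k s a) := by
  intro k _ s a
  have : Nonempty A := ⟨a⟩
  have hstep : ∀ i, π (i + 1) s = ExpUpdate.step (t i) lam (q i s) (π i s) :=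
    fun i => funext (hupd i s)
  have hprob : ∀ i, (∀ b, 0 < π i s b) ∧ ∑ b, π i s b = 1 := by
    intro i
    induction i with
    | zero => simp [hπ0, Fintype.card_pos]
    | succ i ih => rw [hstep]; exact ⟨ExpUpdate.step_pos ih.1, ExpUpdate.sum_step ih.1⟩
  set C := Q / lam + Real.log (Fintype.card A)
  have hdecay : ∀ i : ℕ,
      Real.log (π i s a) ≤ Real.log (π (i + 1) s a) + C * ((i : ℝ) + 2)⁻¹ := by
    intro i
    have hti : 0 ≤ t i := by rw [ht]; positivity
    have hlamt : lam * t i = ((i : ℝ) + 2)⁻¹ := by rw [ht]; field_simp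
    have hstep_size :
        t i * (q i s a + lam * Real.log (Fintype.card A)) ≤ C * ((i : ℝ) + 2)⁻¹ :=
      calc t i * (q i s a + lam * Real.log (Fintype.card A))
          ≤ t i * (Q + lam * Real.log (Fintype.card A)) := by gcongr; exact hqQ i s a
        _ = C * ((i : ℝ) + 2)⁻¹ := by rw [← hlamt]; simp only [C]; field_simp
    have := ExpUpdate.log_sub_le_log_step (hprob i).1 (hprob i).2 hti hlam.le
      (hlamt ▸ inv_le_one_of_one_le₀ (by linarith)) (hq0 i s) a
    rw [hstep]; linarith
  have hC : 0 ≤ C := by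
    have : 0 ≤ Q := (hq0 0 s a).trans (hqQ 0 s a)
    positivity
  calc -Real.log (Fintype.card A) - C * (1 + Real.log k)
      ≤ Real.log (π 0 s a) - ∑ i ∈ range k, C * ((i : ℝ) + 2)⁻¹ := by
        rw [hπ0, one_div, Real.log_inv, ← mul_sum]
        gcongr
        exact sum_range_inv_add_two_le_one_add_log k
    _ ≤ Real.log (π k s a) := sub_sum_range_le_of_le_succ_add hdecay k

/-- Lower bound on log-probabilities under exponentiated-gradient updates with
`t_k = 1/(λ(k+2))`, uniform initialization, and bounded nonnegative `q`-values:
`log π_k(a|s) ≥ -log A - (Q/λ + log A)(1 + log k)` for all `k ≥ 1`. -/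
theorem log_prob_lower_bound_exponentiated_updates
    (S A : Type*) [Fintype S] [Fintype A] [Nonempty A]
    (lam Q : ℝ) (hlam : 0 < lam) (hQ : 0 ≤ Q)
    (t : ℕ → ℝ) (ht : ∀ k, t k = 1 / (lam * (k + 2)))
    (q : ℕ → S → A → ℝ) (hq0 : ∀ k s a, 0 ≤ q k s a) (hqQ : ∀ k s a, q k s a ≤ Q)
    (π : ℕ → S → A → ℝ)
    (hπ0 : ∀ s a, π 0 s a = 1 / (Fintype.card A : ℝ))
    (hupd : ∀ k s a, π (k + 1) s a =
      π k s a * Real.exp (-(t k) * (q k s a + lam * Real.log (π k s a)))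
        / ∑ a', π k s a' * Real.exp (-(t k) * (q k s a' + lam * Real.log (π k s a')))) :
    ∀ k : ℕ, 1 ≤ k → ∀ s a,
      -Real.log (Fintype.card A)
          - (Q / lam + Real.log (Fintype.card A)) * (1 + Real.log k)
        ≤ Real.log (π k s a) :=
  log_prob_lower_bound_exponentiated_updates_general S A lam Q hlam t ht q hq0 hqQ π hπ0 hupd
end
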